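/- Let a < b, ρ ∈ (0,1), and let H : [a,b] → [0,∞) be strictly convex, strictly increasing and continuously differentiable, with H(a) = 0 and H'(a) < ρ. Suppose there exists z_ρ ∈ (a,b) with H'(z_ρ) = ρ. Define v(u) = H(u) for a ≤ u ≤ z_ρ and v(u) = ρ·(u − z_ρ) + H(z_ρ) for z_ρ ≤ u ≤ b. Then v is admissible, and v is the unique minimizer of K_{a,b} over all admissible functions. -/

import Mathlib

open MeasureTheory

/-- `h_ρ(z) = z log(z/ρ) + (1-z) log((1-z)/(1-ρ))` (with `0 log 0 = 0`,
which holds automatically since `Real.log 0 = 0`). -/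
noncomputable def hRho (ρ z : ℝ) : ℝ :=
  z * Real.log (z / ρ) + (1 - z) * Real.log ((1 - z) / (1 - ρ))

/-- `v` is admissible on `[a,b]` with obstacle `H`: differentiable on `[a,b]`,
`v a = 0`, `0 ≤ v' ≤ 1` on `[a,b]`, and `v ≤ H` on `[a,b]`. -/
def Admissible (a b : ℝ) (H v : ℝ → ℝ) : Prop :=
  DifferentiableOn ℝ v (Set.Icc a b) ∧ v a = 0 ∧
    (∀ u ∈ Set.Icc a b, derivWithin v (Set.Icc a b) u ∈ Set.Icc (0 : ℝ) 1) ∧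
    ∀ u ∈ Set.Icc a b, v u ≤ H u

/-- The cost `K_{a,b}(v) = ∫_a^b h_ρ(v'(u)) du`. -/
noncomputable def cost (ρ a b : ℝ) (v : ℝ → ℝ) : ℝ :=
  ∫ u in a..b, hRho ρ (derivWithin v (Set.Icc a b) u)

/-!
Write `v` for the candidate and `ψ = h_ρ'(v')`. On `(a, b]` the slope `v' = min(H', ρ)` lies
in `(0, 1)`, so strict convexity of `h_ρ` gives `h_ρ(w') = h_ρ(v') + ψ (w' - v') + D(w', v')`
with a Bregman divergence `D ≥ 0` that vanishes only where `w' = v'`. The weight `ψ` is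
nondecreasing, nonpositive and vanishes on `[z_ρ, b]`, while `w - v = w - H ≤ 0` on `[a, z_ρ]`;
integrating by parts against the Stieltjes measure `dψ` therefore gives `∫ ψ (w' - v') ≥ 0`.
As `ψ` may diverge at `a` (when `H'(a) = 0`), this is done on `[c, b]` and `c → a`: the
boundary term `ψ(c) (H(c) - w(c))` is `O((c - a) + H(c))` because `H(c) ≤ (c - a) H'(c)` and
`p log p` is bounded. Hence `K(w) ≥ K(v) + ∫ D(w', v')`, and equality forces `w' = v'` almost
everywhere, so `w = v`.
-/

open Set Filter Topology Real

lemma StrictConvexOn.add_mul_sub_lt_of_hasDerivAt {S : Set ℝ} {f : ℝ → ℝ} {f' x y : ℝ}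
    (hf : StrictConvexOn ℝ S f) (hx : x ∈ S) (hy : y ∈ S) (hyx : y ≠ x)
    (hf' : HasDerivAt f f' x) : f x + f' * (y - x) < f y := by
  rcases hyx.lt_or_gt with hlt | hgt
  · have := hf.slope_lt_of_hasDerivAt hy hx hlt hf'
    rw [slope_def_field, div_lt_iff₀ (sub_pos.2 hlt)] at this
    linarith
  · have := hf.lt_slope_of_hasDerivAt hx hy hgt hf'
    rw [slope_def_field, lt_div_iff₀ (sub_pos.2 hgt)] at this
    linarith

section RelativeEntropy

variable {ρ : ℝ}

noncomputable def hRhoDeriv (ρ p : ℝ) : ℝ := log p - log (1 - p) - log ρ + log (1 - ρ)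

noncomputable def hRhoBregman (ρ p q : ℝ) : ℝ :=
  hRho ρ q - hRho ρ p - hRhoDeriv ρ p * (q - p)

lemma hRho_eq_neg_binEntropy (hρ0 : 0 < ρ) (hρ1 : ρ < 1) (z : ℝ) :
    hRho ρ z = -binEntropy z - z * log ρ - (1 - z) * log (1 - ρ) := by
  unfold hRho
  rw [binEntropy, log_inv, log_inv]
  rcases eq_or_ne z 0 with rfl | hz0
  · simp
  rcases eq_or_ne z 1 with rfl | hz1
  · simp
  rw [log_div hz0 hρ0.ne', log_div (sub_ne_zero.2 hz1.symm) (by linarith)]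
  ring

lemma continuous_hRho (hρ0 : 0 < ρ) (hρ1 : ρ < 1) : Continuous (hRho ρ) := by
  rw [funext (hRho_eq_neg_binEntropy hρ0 hρ1)]
  fun_prop

lemma strictConvexOn_hRho (hρ0 : 0 < ρ) (hρ1 : ρ < 1) :
    StrictConvexOn ℝ (Icc 0 1) (hRho ρ) := by
  have haff : ConvexOn ℝ (Icc 0 1) fun z : ℝ => -z * log ρ - (1 - z) * log (1 - ρ) :=
    ((LinearMap.convexOn ((log (1 - ρ) - log ρ) • LinearMap.id) (convex_Icc 0 1)).add_const
      (-log (1 - ρ))).congr fun z _ => by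
        simp only [LinearMap.coe_smul, LinearMap.id_coe, Pi.add_apply, Pi.smul_apply, id_eq,
          smul_eq_mul]
        ring
  refine (strictConcave_binEntropy.neg.add_convexOn haff).congr fun z _ => ?_
  simp only [Pi.add_apply, Pi.neg_apply, hRho_eq_neg_binEntropy hρ0 hρ1]
  ring

lemma hasDerivAt_hRho (hρ0 : 0 < ρ) (hρ1 : ρ < 1) {p : ℝ} (hp : p ∈ Ioo 0 1) :
    HasDerivAt (hRho ρ) (hRhoDeriv ρ p) p := by
  rw [funext (hRho_eq_neg_binEntropy hρ0 hρ1)]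
  refine ((((hasDerivAt_binEntropy hp.1.ne' hp.2.ne).neg.sub
    ((hasDerivAt_id' p).mul_const (log ρ))).sub
      (((hasDerivAt_id' p).const_sub 1).mul_const (log (1 - ρ))))).congr_deriv ?_
  unfold hRhoDeriv
  ring

lemma hRho_self (ρ : ℝ) : hRho ρ ρ = 0 := by
  simp [hRho]

lemma hRhoDeriv_self (ρ : ℝ) : hRhoDeriv ρ ρ = 0 := by
  simp [hRhoDeriv]

lemma hRhoBregman_pos (hρ0 : 0 < ρ) (hρ1 : ρ < 1) {p q : ℝ} (hp : p ∈ Ioo 0 1)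
    (hq : q ∈ Icc 0 1) (hqp : q ≠ p) : 0 < hRhoBregman ρ p q := by
  have := (strictConvexOn_hRho hρ0 hρ1).add_mul_sub_lt_of_hasDerivAt (Ioo_subset_Icc_self hp)
    hq hqp (hasDerivAt_hRho hρ0 hρ1 hp)
  unfold hRhoBregman
  linarith

lemma hRhoBregman_nonneg (hρ0 : 0 < ρ) (hρ1 : ρ < 1) {p q : ℝ} (hp : p ∈ Ioo 0 1)
    (hq : q ∈ Icc 0 1) : 0 ≤ hRhoBregman ρ p q := by
  rcases eq_or_ne q p with rfl | hqp
  · simp [hRhoBregman]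
  · exact (hRhoBregman_pos hρ0 hρ1 hp hq hqp).le

lemma hRho_nonneg (hρ0 : 0 < ρ) (hρ1 : ρ < 1) {z : ℝ} (hz : z ∈ Icc 0 1) :
    0 ≤ hRho ρ z := by
  simpa [hRhoBregman, hRho_self, hRhoDeriv_self] using
    hRhoBregman_nonneg hρ0 hρ1 ⟨hρ0, hρ1⟩ hz

lemma monotoneOn_hRhoDeriv (ρ : ℝ) : MonotoneOn (hRhoDeriv ρ) (Ioo 0 1) := by
  intro p hp q hq hpq
  have := log_le_log hp.1 hpq
  have := log_le_log (sub_pos.2 hq.2) (sub_le_sub_left hpq 1)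
  unfold hRhoDeriv
  linarith

lemma continuousOn_hRhoDeriv (ρ : ℝ) : ContinuousOn (hRhoDeriv ρ) (Ioo 0 1) := by
  unfold hRhoDeriv
  exact (((continuousOn_log.mono fun p hp => hp.1.ne').sub
    (continuousOn_log.comp (continuousOn_const.sub continuousOn_id)
      fun p hp => (sub_pos.2 hp.2).ne')).sub continuousOn_const).add continuousOn_const

lemma measurable_hRhoDeriv (ρ : ℝ) : Measurable (hRhoDeriv ρ) := by
  unfold hRhoDeriv
  fun_prop

lemma neg_hRhoDeriv_mul_le (hρ0 : 0 < ρ) (hρ1 : ρ < 1) {p q t : ℝ} (hp : p ∈ Ioo 0 1)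
    (hq : 0 ≤ q) (hqt : q ≤ t * p) (ht : 0 ≤ t) :
    -hRhoDeriv ρ p * q ≤ t - log (1 - ρ) * q := by
  have hlogp : log p ≤ 0 := log_nonpos hp.1.le hp.2.le
  have hdrop : (log (1 - p) + log ρ) * q ≤ 0 := mul_nonpos_of_nonpos_of_nonneg
    (add_nonpos (log_nonpos (by linarith [hp.2]) (by linarith [hp.1])) (log_nonpos hρ0.le hρ1.le))
    hq
  have hplogp : -(log p * p) ≤ 1 := by
    linarith [neg_abs_le (log p * p), abs_log_mul_self_lt p hp.1 hp.2.le]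
  calc -hRhoDeriv ρ p * q ≤ -log p * q - log (1 - ρ) * q := by
        unfold hRhoDeriv
        linarith
    _ ≤ -log p * (t * p) - log (1 - ρ) * q := by gcongr; linarith
    _ = t * -(log p * p) - log (1 - ρ) * q := by ring
    _ ≤ t - log (1 - ρ) * q := by linarith [mul_le_of_le_one_right ht hplogp]

end RelativeEntropy

section IntegrationByParts

lemma exists_stieltjesFunction_eqOn {c d : ℝ} {ψ : ℝ → ℝ} (hcd : c ≤ d)
    (hψm : MonotoneOn ψ (Icc c d)) (hψc : ContinuousOn ψ (Icc c d)) :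
    ∃ Ψ : StieltjesFunction ℝ, EqOn Ψ ψ (Icc c d) := by
  have hproj : ∀ u, (projIcc c d hcd u : ℝ) ∈ Icc c d := fun u => (projIcc c d hcd u).2
  refine ⟨⟨fun u => ψ (projIcc c d hcd u),
    fun x y hxy => hψm (hproj x) (hproj y) (monotone_projIcc hcd hxy),
    fun x => (hψc.comp_continuous (continuous_subtype_val.comp continuous_projIcc)
      hproj).continuousWithinAt⟩, fun u hu => ?_⟩
  change ψ (projIcc c d hcd u) = ψ u
  rw [projIcc_of_mem hcd hu]

theorem StieltjesFunction.integral_mul_deriv_eq (Ψ : StieltjesFunction ℝ) {c d : ℝ}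
    (hcd : c ≤ d) {f f' : ℝ → ℝ} (hf : ContinuousOn f (Icc c d))
    (hf' : ∀ x ∈ Ioo c d, HasDerivAt f (f' x) x)
    (hf'i : IntervalIntegrable f' volume c d) :
    ∫ u in c..d, Ψ u * f' u = Ψ d * f d - Ψ c * f c - ∫ t in Ioc c d, f t ∂Ψ.measure := by
  set μ := Ψ.measure.restrict (Ioc c d)
  have hμ : μ univ = ENNReal.ofReal (Ψ d - Ψ c) := by simp [μ, Ψ.measure_Ioc]
  have : IsFiniteMeasure μ := ⟨by simp [hμ]⟩
  have hμIoi : ∀ u ∈ Icc c d, μ.real (Ioi u) = Ψ d - Ψ u := by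
    intro u hu
    rw [measureReal_def, Measure.restrict_apply _root_.measurableSet_Ioi, inter_comm, Ioc_inter_Ioi,
      max_eq_right hu.1, Ψ.measure_Ioc, ENNReal.toReal_ofReal (sub_nonneg.2 (Ψ.mono hu.2))]
  have hftc : ∀ t ∈ Ioc c d, ∫ u in Ioc c d ∩ Iio t, f' u = f t - f c := by
    intro t ht
    have hset : Ioc c d ∩ Iio t = Ioo c t := by
      ext x
      simp only [mem_inter_iff, mem_Ioc, mem_Iio, mem_Ioo]
      exact ⟨fun h => ⟨h.1.1, h.2⟩, fun h => ⟨⟨h.1, h.2.le.trans ht.2⟩, h.2⟩⟩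
    rw [hset, ← integral_Ioc_eq_integral_Ioo,
      ← intervalIntegral.integral_of_le ht.1.le]
    exact intervalIntegral.integral_eq_sub_of_hasDerivAt_of_le ht.1.le
      (hf.mono (Icc_subset_Icc_right ht.2)) (fun x hx => hf' x (Ioo_subset_Ioo_right ht.2 hx))
      (hf'i.mono_set (by rw [uIcc_of_le ht.1.le, uIcc_of_le hcd]; exact Icc_subset_Icc_right ht.2))
  set F : ℝ → ℝ → ℝ := fun u t => if u < t then f' u else 0
  have hF : Integrable (Function.uncurry F) ((volume.restrict (Ioc c d)).prod μ) := by
    have := ((intervalIntegrable_iff_integrableOn_Ioc_of_le hcd).1 hf'i).mul_prod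
      (integrable_const (1 : ℝ) : Integrable (fun _ => (1 : ℝ)) μ)
    refine (this.indicator (measurableSet_lt measurable_fst measurable_snd)).congr
      (Eventually.of_forall fun p => ?_)
    simp [F, Function.uncurry, indicator_apply]
  have hFu : ∀ u ∈ Icc c d, ∫ t, F u t ∂μ = (Ψ d - Ψ u) * f' u := by
    intro u hu
    have : (fun t => F u t) = (Ioi u).indicator fun _ => f' u := by
      ext t; simp [F, indicator_apply]
    rw [this, integral_indicator_const _ _root_.measurableSet_Ioi, hμIoi u hu, smul_eq_mul]
  have hFt : ∀ t ∈ Ioc c d, ∫ u in Ioc c d, F u t = f t - f c := by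
    intro t ht
    have : (fun u => F u t) = (Iio t).indicator f' := by
      ext u; simp [F, indicator_apply]
    rw [this, setIntegral_indicator measurableSet_Iio, hftc t ht]
  have hfμ : Integrable f μ :=
    (hf.integrableOn_Icc (μ := Ψ.measure)).mono_set Ioc_subset_Icc_self
  calc ∫ u in c..d, Ψ u * f' u
      = ∫ u in Ioc c d, (Ψ d * f' u - ∫ t, F u t ∂μ) := by
        rw [intervalIntegral.integral_of_le hcd]
        refine setIntegral_congr_fun measurableSet_Ioc fun u hu => ?_
        rw [hFu u (Ioc_subset_Icc_self hu)]
        ring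
    _ = Ψ d * (f d - f c) - ∫ t, (∫ u in Ioc c d, F u t) ∂μ := by
        have hint : Integrable (fun u => ∫ t, F u t ∂μ) (volume.restrict (Ioc c d)) :=
          hF.integral_prod_left
        rw [integral_sub (((intervalIntegrable_iff_integrableOn_Ioc_of_le hcd).1 hf'i).const_mul _)
          hint, integral_const_mul, integral_integral_swap hF,
          ← intervalIntegral.integral_of_le hcd,
          intervalIntegral.integral_eq_sub_of_hasDerivAt_of_le hcd hf hf' hf'i]
    _ = Ψ d * (f d - f c) - ∫ t, (f t - f c) ∂μ := by
        congr 1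
        exact integral_congr_ae (ae_restrict_of_forall_mem measurableSet_Ioc hFt)
    _ = Ψ d * f d - Ψ c * f c - ∫ t in Ioc c d, f t ∂Ψ.measure := by
        rw [integral_sub hfμ (integrable_const _), integral_const, smul_eq_mul, measureReal_def,
          hμ,
          ENNReal.toReal_ofReal (sub_nonneg.2 (Ψ.mono hcd))]
        ring

theorem integral_mul_deriv_ge_of_monotoneOn {c d : ℝ} (hcd : c ≤ d) {ψ f f' : ℝ → ℝ}
    (hψm : MonotoneOn ψ (Icc c d)) (hψc : ContinuousOn ψ (Icc c d))
    (hf : ContinuousOn f (Icc c d)) (hf' : ∀ x ∈ Ioo c d, HasDerivAt f (f' x) x)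
    (hf'i : IntervalIntegrable f' volume c d) (hf0 : ∀ x ∈ Icc c d, f x ≤ 0) :
    ψ d * f d - ψ c * f c ≤ ∫ u in c..d, ψ u * f' u := by
  obtain ⟨Ψ, hΨ⟩ := exists_stieltjesFunction_eqOn hcd hψm hψc
  have hIBP := Ψ.integral_mul_deriv_eq hcd hf hf' hf'i
  have hΨψ : ∫ u in c..d, Ψ u * f' u = ∫ u in c..d, ψ u * f' u :=
    intervalIntegral.integral_congr fun u hu => by
      rw [uIcc_of_le hcd] at hu
      simp only [hΨ hu]
  rw [hΨψ, hΨ (right_mem_Icc.2 hcd), hΨ (left_mem_Icc.2 hcd)] at hIBP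
  have : ∫ t in Ioc c d, f t ∂Ψ.measure ≤ 0 :=
    setIntegral_nonpos measurableSet_Ioc fun t ht => hf0 t (Ioc_subset_Icc_self ht)
  linarith

end IntegrationByParts

section Calculus

lemma intervalIntegrable_of_abs_le {f : ℝ → ℝ} {x y C : ℝ} (hxy : x ≤ y)
    (hf : Measurable f) (hC : ∀ u ∈ Ioo x y, |f u| ≤ C) :
    IntervalIntegrable f volume x y := by
  rw [intervalIntegrable_iff_integrableOn_Ioo_of_le hxy]
  exact Measure.integrableOn_of_bounded measure_Ioo_lt_top.ne hf.aestronglyMeasurable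
    (ae_restrict_of_forall_mem measurableSet_Ioo hC)

lemma ae_restrict_Ioo_of_forall_Ioo {p : ℝ → Prop} {a z b : ℝ} (haz : a < z)
    (h : ∀ c ∈ Ioo a z, ∀ᵐ u ∂volume.restrict (Ioo c b), p u) :
    ∀ᵐ u ∂volume.restrict (Ioo a b), p u := by
  obtain ⟨c, -, hc, hlim⟩ := exists_seq_strictAnti_tendsto' haz
  have hsub : Ioo a b ⊆ ⋃ n, Ioo (c n) b := fun u hu => by
    obtain ⟨n, hn⟩ := (hlim.eventually (gt_mem_nhds hu.1)).exists
    exact mem_iUnion.2 ⟨n, hn, hu.2⟩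
  exact ae_restrict_of_ae_restrict_of_subset hsub
    ((ae_restrict_iUnion_iff _ _).2 fun n => h _ (hc n))

lemma eq_of_hasDerivAt_of_ae_eq_zero {f f' : ℝ → ℝ} {a b : ℝ}
    (hf : ContinuousOn f (Icc a b)) (hf' : ∀ x ∈ Ioo a b, HasDerivAt f (f' x) x)
    (h0 : ∀ᵐ x ∂volume.restrict (Ioo a b), f' x = 0) {x : ℝ} (hx : x ∈ Icc a b) :
    f x = f a := by
  have h0x : f' =ᵐ[volume.restrict (Ioc a x)] 0 := by
    rw [← Measure.restrict_congr_set Ioo_ae_eq_Ioc]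
    exact ae_restrict_of_ae_restrict_of_subset (Ioo_subset_Ioo_right hx.2) h0
  have hint : IntervalIntegrable f' volume a x :=
    (intervalIntegrable_iff_integrableOn_Ioc_of_le hx.1).2 ((integrable_zero _ _ _).congr h0x.symm)
  have hftc := intervalIntegral.integral_eq_sub_of_hasDerivAt_of_le hx.1
    (hf.mono (Icc_subset_Icc_right hx.2)) (fun y hy => hf' y (Ioo_subset_Ioo_right hx.2 hy)) hint
  rw [intervalIntegral.integral_of_le hx.1, integral_congr_ae h0x] at hftc
  simp only [Pi.zero_apply, integral_zero] at hftc
  linarith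

lemma intervalIntegral_nonneg_of_forall_Ioo {f : ℝ → ℝ} {x y : ℝ} (hxy : x ≤ y)
    (hf : ∀ u ∈ Ioo x y, 0 ≤ f u) : 0 ≤ ∫ u in x..y, f u :=
  intervalIntegral.integral_nonneg_of_ae_restrict hxy (by
    rw [← Measure.restrict_congr_set Ioo_ae_eq_Icc]
    exact ae_restrict_of_forall_mem measurableSet_Ioo hf)

lemma intervalIntegrable_hRho_deriv {ρ : ℝ} (hρ0 : 0 < ρ) (hρ1 : ρ < 1) {f : ℝ → ℝ}
    {x y : ℝ}    (hxy : x ≤ y) (hf : ∀ u ∈ Ioo x y, deriv f u ∈ Icc 0 1) :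
    IntervalIntegrable (fun u => hRho ρ (deriv f u)) volume x y := by
  obtain ⟨C, hC⟩ :=
    isCompact_Icc.exists_bound_of_continuousOn (continuous_hRho hρ0 hρ1).continuousOn
  exact intervalIntegrable_of_abs_le hxy
    ((continuous_hRho hρ0 hρ1).measurable.comp (measurable_deriv f)) fun u hu => hC _ (hf u hu)

end Calculus

lemma cost_eq_integral_deriv (ρ : ℝ) {a b : ℝ} (hab : a ≤ b) (v : ℝ → ℝ) :
    cost ρ a b v = ∫ u in a..b, hRho ρ (deriv v u) := by
  unfold cost
  rw [intervalIntegral.integral_of_le hab, intervalIntegral.integral_of_le hab,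
    integral_Ioc_eq_integral_Ioo, integral_Ioc_eq_integral_Ioo]
  exact setIntegral_congr_fun measurableSet_Ioo fun u hu => by
    rw [derivWithin_of_mem_nhds (Icc_mem_nhds hu.1 hu.2)]

namespace Admissible

variable {a b : ℝ} {H w : ℝ → ℝ}

lemma hasDerivAt (hw : Admissible a b H w) {u : ℝ} (hu : u ∈ Ioo a b) :
    HasDerivAt w (deriv w u) u :=
  ((hw.1 u (Ioo_subset_Icc_self hu)).differentiableAt (Icc_mem_nhds hu.1 hu.2)).hasDerivAt

lemma deriv_mem (hw : Admissible a b H w) {u : ℝ} (hu : u ∈ Ioo a b) :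
    deriv w u ∈ Icc 0 1 := by
  rw [← derivWithin_of_mem_nhds (Icc_mem_nhds hu.1 hu.2)]
  exact hw.2.2.1 u (Ioo_subset_Icc_self hu)

lemma nonneg (hw : Admissible a b H w) {u : ℝ} (hu : u ∈ Icc a b) : 0 ≤ w u := by
  have hmono : MonotoneOn w (Icc a b) :=
    monotoneOn_of_deriv_nonneg (convex_Icc a b) hw.1.continuousOn
      (by
        rw [interior_Icc]
        exact fun x hx => (hw.hasDerivAt hx).differentiableAt.differentiableWithinAt)
      (by rw [interior_Icc]; exact fun x hx => (hw.deriv_mem hx).1)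
  simpa [hw.2.1] using hmono (left_mem_Icc.2 (hu.1.trans hu.2)) hu hu.1

lemma intervalIntegrable_hRho_deriv {ρ : ℝ} (hρ0 : 0 < ρ) (hρ1 : ρ < 1)
    (hw : Admissible a b H w) {x y : ℝ} (hax : a ≤ x) (hxy : x ≤ y) (hyb : y ≤ b) :
    IntervalIntegrable (fun u => hRho ρ (deriv w u)) volume x y :=
  _root_.intervalIntegrable_hRho_deriv hρ0 hρ1 hxy fun _ hu =>
    hw.deriv_mem ⟨hax.trans_lt hu.1, hu.2.trans_le hyb⟩

end Admissible

/-- The features of the candidate (`H` up to `z`, then the tangent line of slope `ρ`) that the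
comparison argument uses. -/
structure IsSaturatingProfile (ρ a z b : ℝ) (v : ℝ → ℝ) : Prop where
  left_lt : a < z
  lt_right : z < b
  continuousOn : ContinuousOn v (Icc a b)
  differentiableOn : DifferentiableOn ℝ v (Ioo a b)
  apply_left : v a = 0
  deriv_pos : ∀ u ∈ Ioo a b, 0 < deriv v u
  monotoneOn_deriv : MonotoneOn (deriv v) (Ioo a b)
  continuousOn_deriv : ContinuousOn (deriv v) (Ioo a b)
  deriv_eq : ∀ u ∈ Icc z b, deriv v u = ρ

namespace IsSaturatingProfile

variable {ρ a z b c : ℝ} {v w H : ℝ → ℝ}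

lemma hasDerivAt (hv : IsSaturatingProfile ρ a z b v) {u : ℝ} (hu : u ∈ Ioo a b) :
    HasDerivAt v (deriv v u) u :=
  (hv.differentiableOn.differentiableAt (Ioo_mem_nhds hu.1 hu.2)).hasDerivAt

lemma deriv_le (hv : IsSaturatingProfile ρ a z b v) {u : ℝ} (hu : u ∈ Ioo a b) :
    deriv v u ≤ ρ := by
  rcases le_total u z with huz | hzu
  · rw [← hv.deriv_eq z ⟨le_rfl, hv.lt_right.le⟩]
    exact hv.monotoneOn_deriv hu ⟨hv.left_lt, hv.lt_right⟩ huz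
  · exact (hv.deriv_eq u ⟨hzu, hu.2.le⟩).le

lemma deriv_mem_Ioo (hρ1 : ρ < 1) (hv : IsSaturatingProfile ρ a z b v) {u : ℝ}
    (hu : u ∈ Ioo a b) : deriv v u ∈ Ioo 0 1 :=
  ⟨hv.deriv_pos u hu, (hv.deriv_le hu).trans_lt hρ1⟩

lemma le_mul_deriv (hv : IsSaturatingProfile ρ a z b v) (hc : c ∈ Ioo a b) :
    v c ≤ (c - a) * deriv v c := by
  obtain ⟨ξ, hξ, hξv⟩ := exists_deriv_eq_slope v hc.1
    (hv.continuousOn.mono (Icc_subset_Icc_right hc.2.le))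
    (hv.differentiableOn.mono (Ioo_subset_Ioo_right hc.2.le))
  have hle : deriv v ξ ≤ deriv v c :=
    hv.monotoneOn_deriv ⟨hξ.1, hξ.2.trans hc.2⟩ hc hξ.2.le
  rw [hξv, hv.apply_left, sub_zero, div_le_iff₀ (sub_pos.2 hc.1)] at hle
  linarith

lemma hRhoDeriv_deriv_nonpos (hρ0 : 0 < ρ) (hρ1 : ρ < 1) (hv : IsSaturatingProfile ρ a z b v)
    {u : ℝ} (hu : u ∈ Ioo a b) : hRhoDeriv ρ (deriv v u) ≤ 0 := by
  rw [← hRhoDeriv_self ρ]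
  exact monotoneOn_hRhoDeriv ρ (hv.deriv_mem_Ioo hρ1 hu) ⟨hρ0, hρ1⟩ (hv.deriv_le hu)

lemma monotoneOn_hRhoDeriv_deriv (hρ1 : ρ < 1) (hv : IsSaturatingProfile ρ a z b v) :
    MonotoneOn (fun u => hRhoDeriv ρ (deriv v u)) (Ioo a b) :=
  fun _ hx _ hy hxy => monotoneOn_hRhoDeriv ρ (hv.deriv_mem_Ioo hρ1 hx) (hv.deriv_mem_Ioo hρ1 hy)
    (hv.monotoneOn_deriv hx hy hxy)

lemma continuousOn_hRhoDeriv_deriv (hρ1 : ρ < 1) (hv : IsSaturatingProfile ρ a z b v) :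
    ContinuousOn (fun u => hRhoDeriv ρ (deriv v u)) (Ioo a b) :=
  (continuousOn_hRhoDeriv ρ).comp hv.continuousOn_deriv fun _ hu => hv.deriv_mem_Ioo hρ1 hu

lemma intervalIntegrable_hRho_deriv (hρ0 : 0 < ρ) (hρ1 : ρ < 1)
    (hv : IsSaturatingProfile ρ a z b v) {x y : ℝ} (hax : a ≤ x) (hxy : x ≤ y)
    (hyb : y ≤ b) :
    IntervalIntegrable (fun u => hRho ρ (deriv v u)) volume x y :=
  _root_.intervalIntegrable_hRho_deriv hρ0 hρ1 hxy fun _ hu =>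
    Ioo_subset_Icc_self (hv.deriv_mem_Ioo hρ1 ⟨hax.trans_lt hu.1, hu.2.trans_le hyb⟩)

lemma abs_deriv_sub_le_one (hρ1 : ρ < 1) (hv : IsSaturatingProfile ρ a z b v)
    (hw : Admissible a b H w) {u : ℝ} (hu : u ∈ Ioo a b) : |deriv w u - deriv v u| ≤ 1 := by
  have hw' := hw.deriv_mem hu
  have hv' := hv.deriv_mem_Ioo hρ1 hu
  exact abs_sub_le_iff.2 ⟨by linarith [hw'.2, hv'.1], by linarith [hw'.1, hv'.2]⟩

lemma intervalIntegrable_hRhoDeriv_mul (hρ0 : 0 < ρ) (hρ1 : ρ < 1)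
    (hv : IsSaturatingProfile ρ a z b v) (hw : Admissible a b H w) (hc : c ∈ Ioo a b) {x y : ℝ}
    (hcx : c ≤ x) (hxy : x ≤ y) (hyb : y ≤ b) :
    IntervalIntegrable (fun u => hRhoDeriv ρ (deriv v u) * (deriv w u - deriv v u))
      volume x y := by
  refine intervalIntegrable_of_abs_le (C := -hRhoDeriv ρ (deriv v c)) hxy
    (((measurable_hRhoDeriv ρ).comp (measurable_deriv v)).mul
      ((measurable_deriv w).sub (measurable_deriv v))) fun u hu => ?_
  have hu' : u ∈ Ioo a b := ⟨hc.1.trans_le (hcx.trans hu.1.le), hu.2.trans_le hyb⟩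
  have hψ : |hRhoDeriv ρ (deriv v u)| ≤ -hRhoDeriv ρ (deriv v c) := by
    rw [abs_of_nonpos (hv.hRhoDeriv_deriv_nonpos hρ0 hρ1 hu')]
    exact neg_le_neg (hv.monotoneOn_hRhoDeriv_deriv hρ1 hc hu' (hcx.trans hu.1.le))
  rw [abs_mul]
  exact (mul_le_of_le_one_right (abs_nonneg _) (hv.abs_deriv_sub_le_one hρ1 hw hu')).trans hψ

lemma intervalIntegrable_hRhoBregman (hρ0 : 0 < ρ) (hρ1 : ρ < 1)
    (hv : IsSaturatingProfile ρ a z b v) (hw : Admissible a b H w) (hc : c ∈ Ioo a b) {y : ℝ}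
    (hcy : c ≤ y) (hyb : y ≤ b) :
    IntervalIntegrable (fun u => hRhoBregman ρ (deriv v u) (deriv w u)) volume c y :=
  ((hw.intervalIntegrable_hRho_deriv hρ0 hρ1 hc.1.le hcy hyb).sub
    (hv.intervalIntegrable_hRho_deriv hρ0 hρ1 hc.1.le hcy hyb)).sub
    (hv.intervalIntegrable_hRhoDeriv_mul hρ0 hρ1 hw hc le_rfl hcy hyb)

lemma hRhoBregman_deriv_nonneg (hρ0 : 0 < ρ) (hρ1 : ρ < 1) (hv : IsSaturatingProfile ρ a z b v)
    (hw : Admissible a b H w) {u : ℝ} (hu : u ∈ Ioo a b) :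
    0 ≤ hRhoBregman ρ (deriv v u) (deriv w u) :=
  hRhoBregman_nonneg hρ0 hρ1 (hv.deriv_mem_Ioo hρ1 hu) (hw.deriv_mem hu)

lemma hRhoDeriv_mul_sub_le_integral (hρ0 : 0 < ρ) (hρ1 : ρ < 1)
    (hv : IsSaturatingProfile ρ a z b v) (hvH : EqOn v H (Icc a z)) (hw : Admissible a b H w)
    (hc : c ∈ Ioo a z) :
    hRhoDeriv ρ (deriv v c) * (v c - w c) ≤
      ∫ u in c..b, hRhoDeriv ρ (deriv v u) * (deriv w u - deriv v u) := by
  have hzb := hv.lt_right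
  have hcab : c ∈ Ioo a b := ⟨hc.1, hc.2.trans hzb⟩
  have hsub : Icc c z ⊆ Ioo a b := Icc_subset_Ioo hc.1 hzb
  have hsat : ∫ u in z..b, hRhoDeriv ρ (deriv v u) * (deriv w u - deriv v u) = 0 := by
    refine (intervalIntegral.integral_congr (g := fun _ => 0) fun u hu => ?_).trans
      intervalIntegral.integral_zero
    rw [uIcc_of_le hzb.le] at hu
    simp [hv.deriv_eq u hu, hRhoDeriv_self]
  have hibp := integral_mul_deriv_ge_of_monotoneOn hc.2.le
    ((hv.monotoneOn_hRhoDeriv_deriv hρ1).mono hsub)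
    ((hv.continuousOn_hRhoDeriv_deriv hρ1).mono hsub)
    (f := fun u => w u - v u) (f' := fun u => deriv w u - deriv v u)
    ((hw.1.continuousOn.sub hv.continuousOn).mono (Icc_subset_Icc hc.1.le hzb.le))
    (fun u hu => (hw.hasDerivAt (hsub (Ioo_subset_Icc_self hu))).sub
      (hv.hasDerivAt (hsub (Ioo_subset_Icc_self hu))))
    (intervalIntegrable_of_abs_le (C := 1) hc.2.le ((measurable_deriv w).sub (measurable_deriv v))
      fun u hu => hv.abs_deriv_sub_le_one hρ1 hw (hsub (Ioo_subset_Icc_self hu)))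
    (fun u hu => by
      simp only [hvH ⟨hc.1.le.trans hu.1, hu.2⟩, sub_nonpos]
      exact hw.2.2.2 u (Icc_subset_Icc hc.1.le hzb.le hu))
  simp only [hv.deriv_eq z ⟨le_rfl, hzb.le⟩, hRhoDeriv_self, zero_mul, zero_sub] at hibp
  rw [← intervalIntegral.integral_add_adjacent_intervals
    (hv.intervalIntegrable_hRhoDeriv_mul hρ0 hρ1 hw hcab le_rfl hc.2.le hzb.le)
    (hv.intervalIntegrable_hRhoDeriv_mul hρ0 hρ1 hw hcab hc.2.le hzb.le le_rfl), hsat, add_zero]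
  linarith

theorem cost_add_integral_hRhoBregman_le_add (hρ0 : 0 < ρ) (hρ1 : ρ < 1)
    (hv : IsSaturatingProfile ρ a z b v) (hvH : EqOn v H (Icc a z)) (hw : Admissible a b H w)
    (hc : c ∈ Ioo a z) :
    cost ρ a b v + ∫ u in c..b, hRhoBregman ρ (deriv v u) (deriv w u) ≤
      cost ρ a b w + ((∫ u in a..c, hRho ρ (deriv v u)) + (c - a) - log (1 - ρ) * v c) := by
  have hab : a ≤ b := (hv.left_lt.trans hv.lt_right).le
  have hcab : c ∈ Ioo a b := ⟨hc.1, hc.2.trans hv.lt_right⟩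
  have hIw := fun {x y : ℝ} => hw.intervalIntegrable_hRho_deriv (x := x) (y := y) hρ0 hρ1
  have hIv := fun {x y : ℝ} => hv.intervalIntegrable_hRho_deriv (x := x) (y := y) hρ0 hρ1
  have hbregman : ∫ u in c..b, hRhoBregman ρ (deriv v u) (deriv w u) =
      (∫ u in c..b, hRho ρ (deriv w u)) - (∫ u in c..b, hRho ρ (deriv v u)) -
        ∫ u in c..b, hRhoDeriv ρ (deriv v u) * (deriv w u - deriv v u) := by
    simp only [hRhoBregman]
    rw [intervalIntegral.integral_sub ((hIw hc.1.le hcab.2.le le_rfl).sub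
      (hIv hc.1.le hcab.2.le le_rfl))
      (hv.intervalIntegrable_hRhoDeriv_mul hρ0 hρ1 hw hcab le_rfl hcab.2.le le_rfl),
      intervalIntegral.integral_sub (hIw hc.1.le hcab.2.le le_rfl) (hIv hc.1.le hcab.2.le le_rfl)]
  have hibp := hv.hRhoDeriv_mul_sub_le_integral hρ0 hρ1 hvH hw hc
  have hwc : 0 ≤ w c := hw.nonneg (Ioo_subset_Icc_self hcab)
  have hwv : w c ≤ v c := hvH ⟨hc.1.le, hc.2.le⟩ ▸ hw.2.2.2 c (Ioo_subset_Icc_self hcab)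
  have hψc := hv.hRhoDeriv_deriv_nonpos hρ0 hρ1 hcab
  have herr := neg_hRhoDeriv_mul_le hρ0 hρ1 (hv.deriv_mem_Ioo hρ1 hcab) (hwc.trans hwv)
    (hv.le_mul_deriv hcab) (sub_nonneg.2 hc.1.le)
  have hboundary : -((c - a) - log (1 - ρ) * v c) ≤
      ∫ u in c..b, hRhoDeriv ρ (deriv v u) * (deriv w u - deriv v u) := by
    rw [mul_sub] at hibp
    linarith [mul_nonpos_of_nonpos_of_nonneg hψc hwc]
  have hwac : 0 ≤ ∫ u in a..c, hRho ρ (deriv w u) :=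
    intervalIntegral_nonneg_of_forall_Ioo hc.1.le fun u hu =>
      hRho_nonneg hρ0 hρ1 (hw.deriv_mem ⟨hu.1, hu.2.trans hcab.2⟩)
  rw [cost_eq_integral_deriv ρ hab, cost_eq_integral_deriv ρ hab,
    ← intervalIntegral.integral_add_adjacent_intervals (hIv le_rfl hc.1.le hcab.2.le)
      (hIv hc.1.le hcab.2.le le_rfl),
    ← intervalIntegral.integral_add_adjacent_intervals (hIw le_rfl hc.1.le hcab.2.le)
      (hIw hc.1.le hcab.2.le le_rfl)]
  linarith

theorem cost_add_integral_hRhoBregman_le (hρ0 : 0 < ρ) (hρ1 : ρ < 1)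
    (hv : IsSaturatingProfile ρ a z b v) (hvH : EqOn v H (Icc a z)) (hw : Admissible a b H w)
    (hc : c ∈ Ioo a z) :
    cost ρ a b v + ∫ u in c..b, hRhoBregman ρ (deriv v u) (deriv w u) ≤ cost ρ a b w := by
  have hab : a < b := hv.left_lt.trans hv.lt_right
  set E : ℝ → ℝ := fun x =>
    (∫ u in a..x, hRho ρ (deriv v u)) + (x - a) - log (1 - ρ) * v x
  have hE : Tendsto E (𝓝[>] a) (𝓝 0) := by
    have hprim := intervalIntegral.continuousOn_primitive_interval'
      (hv.intervalIntegrable_hRho_deriv hρ0 hρ1 le_rfl hab.le le_rfl) left_mem_uIcc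
    rw [uIcc_of_le hab.le] at hprim
    have hcont : ContinuousWithinAt E (Icc a b) a :=
      ((hprim a (left_mem_Icc.2 hab.le)).add (continuous_sub_right a).continuousWithinAt).sub
        (continuousWithinAt_const.mul (hv.continuousOn a (left_mem_Icc.2 hab.le)))
    have hEa : E a = 0 := by simp [E, hv.apply_left]
    rw [← hEa, ← nhdsWithin_Ioo_eq_nhdsGT hab]
    exact hcont.tendsto.mono_left (nhdsWithin_mono _ Ioo_subset_Icc_self)
  refine (add_zero (cost ρ a b w)) ▸ ge_of_tendsto (hE.const_add (cost ρ a b w)) ?_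
  filter_upwards [Ioo_mem_nhdsGT hc.1] with x hx
  have hzb := hv.lt_right
  have hsplit := intervalIntegral.integral_add_adjacent_intervals
    (hv.intervalIntegrable_hRhoBregman hρ0 hρ1 hw ⟨hx.1, hx.2.trans (hc.2.trans hzb)⟩ hx.2.le
      (hc.2.trans hzb).le)
    (hv.intervalIntegrable_hRhoBregman hρ0 hρ1 hw ⟨hx.1.trans hx.2, hc.2.trans hzb⟩
      (hc.2.trans hzb).le le_rfl)
  have hxc : 0 ≤ ∫ u in x..c, hRhoBregman ρ (deriv v u) (deriv w u) :=
    intervalIntegral_nonneg_of_forall_Ioo hx.2.le fun u hu =>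
      hv.hRhoBregman_deriv_nonneg hρ0 hρ1 hw ⟨hx.1.trans hu.1, hu.2.trans (hc.2.trans hzb)⟩
  have := hv.cost_add_integral_hRhoBregman_le_add hρ0 hρ1 hvH hw ⟨hx.1, hx.2.trans hc.2⟩
  simp only [E]
  linarith

theorem cost_le (hρ0 : 0 < ρ) (hρ1 : ρ < 1) (hv : IsSaturatingProfile ρ a z b v)
    (hvH : EqOn v H (Icc a z)) (hw : Admissible a b H w) : cost ρ a b v ≤ cost ρ a b w := by
  obtain ⟨c, hc⟩ := nonempty_Ioo.2 hv.left_lt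
  have hbregman := intervalIntegral_nonneg_of_forall_Ioo (hc.2.trans hv.lt_right).le fun u hu =>
    hv.hRhoBregman_deriv_nonneg hρ0 hρ1 hw ⟨hc.1.trans hu.1, hu.2⟩
  linarith [hv.cost_add_integral_hRhoBregman_le hρ0 hρ1 hvH hw hc]

theorem eqOn_of_cost_le (hρ0 : 0 < ρ) (hρ1 : ρ < 1) (hv : IsSaturatingProfile ρ a z b v)
    (hvH : EqOn v H (Icc a z)) (hw : Admissible a b H w) (hle : cost ρ a b w ≤ cost ρ a b v) :
    EqOn w v (Icc a b) := by
  have hae : ∀ c ∈ Ioo a z,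
      ∀ᵐ u ∂volume.restrict (Ioo c b), deriv w u - deriv v u = 0 := by
    intro c hc
    have hcab : c ∈ Ioo a b := ⟨hc.1, hc.2.trans hv.lt_right⟩
    have hint := (intervalIntegrable_iff_integrableOn_Ioo_of_le hcab.2.le).1
      (hv.intervalIntegrable_hRhoBregman hρ0 hρ1 hw hcab hcab.2.le le_rfl)
    have hnonneg :
        0 ≤ᵐ[volume.restrict (Ioo c b)] fun u => hRhoBregman ρ (deriv v u) (deriv w u) :=
      ae_restrict_of_forall_mem measurableSet_Ioo fun u hu =>
        hv.hRhoBregman_deriv_nonneg hρ0 hρ1 hw ⟨hc.1.trans hu.1, hu.2⟩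
    have hzero : ∫ u in Ioo c b, hRhoBregman ρ (deriv v u) (deriv w u) = 0 := by
      have := hv.cost_add_integral_hRhoBregman_le hρ0 hρ1 hvH hw hc
      rw [intervalIntegral.integral_of_le hcab.2.le, integral_Ioc_eq_integral_Ioo] at this
      exact le_antisymm (by linarith) (integral_nonneg_of_ae hnonneg)
    filter_upwards [(integral_eq_zero_iff_of_nonneg_ae hnonneg hint).1 hzero,
      ae_restrict_mem measurableSet_Ioo] with u hu hmem
    have hu' : u ∈ Ioo a b := ⟨hc.1.trans hmem.1, hmem.2⟩
    by_contra hne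
    exact (hRhoBregman_pos hρ0 hρ1 (hv.deriv_mem_Ioo hρ1 hu') (hw.deriv_mem hu')
      (sub_ne_zero.1 hne)).ne' hu
  intro x hx
  have := eq_of_hasDerivAt_of_ae_eq_zero (f := fun u => w u - v u)
    (hw.1.continuousOn.sub hv.continuousOn) (fun u hu => (hw.hasDerivAt hu).sub (hv.hasDerivAt hu))
    (ae_restrict_Ioo_of_forall_Ioo hv.left_lt hae) hx
  simp only [hw.2.1, hv.apply_left, sub_zero] at this
  exact sub_eq_zero.1 this

end IsSaturatingProfile

section Obstacle

variable {ρ a b z : ℝ} {H : ℝ → ℝ}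

noncomputable def obstacleMinimizer (ρ z : ℝ) (H : ℝ → ℝ) (u : ℝ) : ℝ :=
  if u ≤ z then H u else ρ * (u - z) + H z

lemma obstacleMinimizer_eventuallyEq {u : ℝ} (hu : u < z) :
    obstacleMinimizer ρ z H =ᶠ[𝓝 u] H := by
  filter_upwards [Iio_mem_nhds hu] with x hx
  exact if_pos (le_of_lt hx)

lemma hasDerivAt_obstacleMinimizer (hHd : DifferentiableOn ℝ H (Ioo a b)) (hz : z ∈ Ioo a b)
    (hz' : deriv H z = ρ) {u : ℝ} (hu : a < u) :
    HasDerivAt (obstacleMinimizer ρ z H) (if u ≤ z then deriv H u else ρ) u := by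
  have hline : ∀ x, HasDerivAt (fun y => ρ * (y - z) + H z) ρ x := fun x => by
    simpa using (((hasDerivAt_id x).sub_const z).const_mul ρ).add_const (H z)
  have hH : ∀ x ∈ Ioc a z, HasDerivAt H (deriv H x) x := fun x hx =>
    (hHd.differentiableAt (Ioo_mem_nhds hx.1 (hx.2.trans_lt hz.2))).hasDerivAt
  rcases lt_trichotomy u z with huz | rfl | hzu
  · rw [if_pos huz.le]
    exact (hH u ⟨hu, huz.le⟩).congr_of_eventuallyEq (obstacleMinimizer_eventuallyEq huz)
  · rw [if_pos le_rfl]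
    have hleft : HasDerivWithinAt (obstacleMinimizer ρ u H) (deriv H u) (Iic u) u :=
      (hH u ⟨hu, le_rfl⟩).hasDerivWithinAt.congr (fun x hx => if_pos hx) (if_pos le_rfl)
    have hright : HasDerivWithinAt (obstacleMinimizer ρ u H) ρ (Ici u) u := by
      refine (hline u).hasDerivWithinAt.congr (fun x hx => ?_) (by simp [obstacleMinimizer])
      rcases (mem_Ici.1 hx).eq_or_lt with rfl | hlt
      · simp [obstacleMinimizer]
      · exact if_neg hlt.not_ge
    rw [hz'] at hleft ⊢
    simpa [Iic_union_Ici] using hleft.union hright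
  · rw [if_neg hzu.not_ge]
    refine (hline u).congr_of_eventuallyEq ?_
    filter_upwards [Ioi_mem_nhds hzu] with x hx
    exact if_neg (not_le.2 hx)

lemma differentiableOn_obstacleMinimizer (hHd : DifferentiableOn ℝ H (Icc a b))
    (hz : z ∈ Ioo a b) (hz' : deriv H z = ρ) :
    DifferentiableOn ℝ (obstacleMinimizer ρ z H) (Icc a b) := by
  intro u hu
  obtain rfl | hau := hu.1.eq_or_lt
  · have hnear := obstacleMinimizer_eventuallyEq (ρ := ρ) (H := H) hz.1
    exact (hHd a hu).congr_of_eventuallyEq (hnear.filter_mono nhdsWithin_le_nhds)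
      hnear.self_of_nhds
  · exact (hasDerivAt_obstacleMinimizer (hHd.mono Ioo_subset_Icc_self) hz hz'
      hau).differentiableAt.differentiableWithinAt

lemma obstacleMinimizer_le (hHconv : ConvexOn ℝ (Icc a b) H)
    (hHd : DifferentiableOn ℝ H (Ioo a b)) (hz : z ∈ Ioo a b) (hz' : deriv H z = ρ) {u : ℝ}
    (hu : u ∈ Icc a b) :
    obstacleMinimizer ρ z H u ≤ H u := by
  unfold obstacleMinimizer
  split_ifs with huz
  · exact le_rfl
  have hzu := not_le.1 huz
  have := hHconv.le_slope_of_hasDerivAt ⟨hz.1.le, hz.2.le⟩ hu hzu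
    (hHd.differentiableAt (Ioo_mem_nhds hz.1 hz.2)).hasDerivAt
  rw [hz', slope_def_field, le_div_iff₀ (sub_pos.2 hzu)] at this
  linarith

theorem admissible_obstacleMinimizer (hab : a < b) (hρ1 : ρ ≤ 1)
    (hHconv : ConvexOn ℝ (Icc a b) H) (hHmono : MonotoneOn H (Icc a b))
    (hHd : DifferentiableOn ℝ H (Icc a b)) (hHa : H a = 0) (hz : z ∈ Ioo a b)
    (hz' : derivWithin H (Icc a b) z = ρ) :
    Admissible a b H (obstacleMinimizer ρ z H) := by
  have hzs : z ∈ Icc a b := Ioo_subset_Icc_self hz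
  have hz'' : deriv H z = ρ := by rw [← derivWithin_of_mem_nhds (Icc_mem_nhds hz.1 hz.2), hz']
  have hH' : ∀ u ∈ Icc a b, u ≤ z → derivWithin H (Icc a b) u ∈ Icc 0 1 := fun u hu huz =>
    ⟨hHmono.derivWithin_nonneg,
      (hz' ▸ hHconv.monotoneOn_derivWithin hHd hu hzs huz).trans hρ1⟩
  refine ⟨differentiableOn_obstacleMinimizer hHd hz hz'',
    by simp [obstacleMinimizer, hz.1.le, hHa], fun u hu => ?_,
    fun u hu => obstacleMinimizer_le hHconv (hHd.mono Ioo_subset_Icc_self) hz hz'' hu⟩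
  obtain rfl | hau := hu.1.eq_or_lt
  · rw [(obstacleMinimizer_eventuallyEq hz.1).derivWithin_eq_of_nhds]
    exact hH' a hu hz.1.le
  rw [(hasDerivAt_obstacleMinimizer (hHd.mono Ioo_subset_Icc_self) hz hz''
    hau).hasDerivWithinAt.derivWithin ((uniqueDiffOn_Icc hab) u hu)]
  split_ifs with huz
  · rw [← derivWithin_of_mem_nhds (Icc_mem_nhds hau (huz.trans_lt hz.2))]
    exact hH' u hu huz
  · exact hz' ▸ hH' z hzs le_rfl

theorem isSaturatingProfile_obstacleMinimizer (hρ0 : 0 < ρ)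
    (hHconv : StrictConvexOn ℝ (Icc a b) H) (hHmono : MonotoneOn H (Icc a b))
    (hHC1 : ContDiffOn ℝ 1 H (Icc a b)) (hHa : H a = 0) (hz : z ∈ Ioo a b)
    (hz' : derivWithin H (Icc a b) z = ρ) :
    IsSaturatingProfile ρ a z b (obstacleMinimizer ρ z H) := by
  have hHd := hHC1.differentiableOn one_ne_zero
  have hHdo : DifferentiableOn ℝ H (Ioo a b) := hHd.mono Ioo_subset_Icc_self
  have hz'' : deriv H z = ρ := by rw [← derivWithin_of_mem_nhds (Icc_mem_nhds hz.1 hz.2), hz']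
  have hH'mono : StrictMonoOn (deriv H) (Ioo a b) :=
    (hHconv.subset Ioo_subset_Icc_self (convex_Ioo a b)).strictMonoOn_deriv fun x hx =>
      hHdo.differentiableAt (Ioo_mem_nhds hx.1 hx.2)
  have hH'pos : ∀ u ∈ Ioo a b, 0 < deriv H u := fun u hu => by
    have := hHconv.slope_lt_of_hasDerivAt (left_mem_Icc.2 (hu.1.trans hu.2).le)
      (Ioo_subset_Icc_self hu) hu.1 (hHdo.differentiableAt (Ioo_mem_nhds hu.1 hu.2)).hasDerivAt
    refine lt_of_le_of_lt (div_nonneg (sub_nonneg.2 ?_) (sub_pos.2 hu.1).le)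
      (slope_def_field H a u ▸ this)
    exact hHmono (left_mem_Icc.2 (hu.1.trans hu.2).le) (Ioo_subset_Icc_self hu) hu.1.le
  have hderiv : ∀ u ∈ Ioo a b, deriv (obstacleMinimizer ρ z H) u = min (deriv H u) ρ := by
    intro u hu
    rw [(hasDerivAt_obstacleMinimizer hHdo hz hz'' hu.1).deriv]
    split_ifs with huz
    · exact (min_eq_left (hz'' ▸ hH'mono.monotoneOn hu hz huz)).symm
    · exact (min_eq_right (hz'' ▸ hH'mono.monotoneOn hz hu (not_le.1 huz).le)).symm
  refine ⟨hz.1, hz.2, (differentiableOn_obstacleMinimizer hHd hz hz'').continuousOn,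
    fun u hu =>
      (hasDerivAt_obstacleMinimizer hHdo hz hz'' hu.1).differentiableAt.differentiableWithinAt,
    by simp [obstacleMinimizer, hz.1.le, hHa], fun u hu => ?_, fun x hx y hy hxy => ?_, ?_,
    fun u hu => ?_⟩
  · rw [hderiv u hu]
    exact lt_min (hH'pos u hu) hρ0
  · rw [hderiv x hx, hderiv y hy]
    exact min_le_min_right ρ (hH'mono.monotoneOn hx hy hxy)
  · exact (ContinuousOn.inf ((hHC1.mono Ioo_subset_Icc_self).continuousOn_deriv_of_isOpen
      isOpen_Ioo le_rfl) continuousOn_const).congr hderiv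
  · rw [(hasDerivAt_obstacleMinimizer hHdo hz hz'' (hz.1.trans_le hu.1)).deriv]
    split_ifs with huz
    · rwa [le_antisymm huz hu.1]
    · rfl

end Obstacle

theorem stmt3_general (a b ρ zρ : ℝ) (H : ℝ → ℝ) (hab : a < b) (hρ0 : 0 < ρ) (hρ1 : ρ < 1)
    (hHconv : StrictConvexOn ℝ (Set.Icc a b) H)
    (hHmono : StrictMonoOn H (Set.Icc a b))
    (hHC1 : ContDiffOn ℝ 1 H (Set.Icc a b))
    (hHa : H a = 0)
    (hz : zρ ∈ Set.Ioo a b)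
    (hz' : derivWithin H (Set.Icc a b) zρ = ρ) :
    Admissible a b H (fun u => if u ≤ zρ then H u else ρ * (u - zρ) + H zρ) ∧
    ∀ w : ℝ → ℝ, Admissible a b H w →
      (∃ u ∈ Set.Icc a b, w u ≠ (if u ≤ zρ then H u else ρ * (u - zρ) + H zρ)) →
      cost ρ a b (fun u => if u ≤ zρ then H u else ρ * (u - zρ) + H zρ) < cost ρ a b w := by
  have hv := isSaturatingProfile_obstacleMinimizer hρ0 hHconv hHmono.monotoneOn hHC1 hHa hz hz'
  have hvH : EqOn (obstacleMinimizer ρ zρ H) H (Icc a zρ) := fun u hu => if_pos hu.2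
  refine ⟨admissible_obstacleMinimizer hab hρ1.le hHconv.convexOn hHmono.monotoneOn
    (hHC1.differentiableOn one_ne_zero) hHa hz hz', fun w hw ⟨u, hu, hne⟩ => ?_⟩
  exact (hv.cost_le hρ0 hρ1 hvH hw).lt_of_ne fun heq =>
    hne (hv.eqOn_of_cost_le hρ0 hρ1 hvH hw heq.ge hu)

theorem stmt3 (a b ρ zρ : ℝ) (H : ℝ → ℝ) (hab : a < b) (hρ0 : 0 < ρ) (hρ1 : ρ < 1)
    (hH0 : ∀ u ∈ Set.Icc a b, 0 ≤ H u)
    (hHconv : StrictConvexOn ℝ (Set.Icc a b) H)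
    (hHmono : StrictMonoOn H (Set.Icc a b))
    (hHC1 : ContDiffOn ℝ 1 H (Set.Icc a b))
    (hHa : H a = 0)
    (hHa' : derivWithin H (Set.Icc a b) a < ρ)
    (hz : zρ ∈ Set.Ioo a b)
    (hz' : derivWithin H (Set.Icc a b) zρ = ρ) :
    Admissible a b H (fun u => if u ≤ zρ then H u else ρ * (u - zρ) + H zρ) ∧
    ∀ w : ℝ → ℝ, Admissible a b H w →
      (∃ u ∈ Set.Icc a b, w u ≠ (if u ≤ zρ then H u else ρ * (u - zρ) + H zρ)) →
      cost ρ a b (fun u => if u ≤ zρ then H u else ρ * (u - zρ) + H zρ) < cost ρ a b w :=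
  stmt3_general a b ρ zρ H hab hρ0 hρ1 hHconv hHmono hHC1 hHa hz hz'
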